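/- arXiv:2501.15952 — 2 statements merged into one kernel-verified Lean document; each statement's English description precedes it below -/
import Mathlib

section
/- Let G be a graph and S⊆V(G) a set satisfying (H1) and (H2). Let F ∈ cmd_3(G−S) be such that G[F] is complete multipartite with exactly three classes. Then there exists s∈S with F⊆N(s); moreover, there is a strict supergraph of a prison in G that contains s and both endpoints of some edge of G[F]. -/
namespace PrisonFreePaper

variable {V : Type*}

/-- The prison graph on 5 vertices: `K₅` minus the two edges `{4,2}` and `{4,3}`
(which share the vertex `4`).  Thus `{0,1,2,3}` is a 4-clique and the vertex `4`
is adjacent exactly to `0` and `1`. -/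
def prison : SimpleGraph (Fin 5) where
  Adj a b := a ≠ b ∧ ¬((a = 4 ∧ (b = 2 ∨ b = 3)) ∨ (b = 4 ∧ (a = 2 ∨ a = 3)))
  symm := by
    constructor
    rintro a b ⟨h1, h2⟩
    exact ⟨h1.symm, by tauto⟩
  loopless := by
    constructor
    rintro a ⟨h, _⟩
    exact h rfl

/-- `P` is a 5-vertex set inducing a subgraph of `G` isomorphic to the prison. -/
def InducesPrison (G : SimpleGraph V) (P : Set V) : Prop :=
  ∃ f : Fin 5 ↪ V, Set.range f = P ∧ ∀ a b, G.Adj (f a) (f b) ↔ prison.Adj a b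

/-- `G` is prison-free: no 5-vertex set induces a prison. -/
def PrisonFree (G : SimpleGraph V) : Prop :=
  ¬ ∃ P : Set V, InducesPrison G P

/-- `P` is the set of classes witnessing that the induced subgraph `G[F]` is
complete multipartite: the classes are nonempty, pairwise disjoint, their union
is `F`, and two vertices of `F` are adjacent iff they lie in different classes. -/
def IsCMP (G : SimpleGraph V) (F : Set V) (P : Set (Set V)) : Prop :=
  (∀ C ∈ P, C.Nonempty ∧ C ⊆ F) ∧
  (⋃₀ P = F) ∧
  (∀ C ∈ P, ∀ D ∈ P, C ≠ D → Disjoint C D) ∧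
  (∀ u ∈ F, ∀ v ∈ F, (G.Adj u v ↔ ¬ ∃ C ∈ P, u ∈ C ∧ v ∈ C))

/-- The induced subgraph `G[F]` is complete multipartite. -/
def CMP (G : SimpleGraph V) (F : Set V) : Prop := ∃ P, IsCMP G F P

/-- The induced subgraph `G[F]` is complete multipartite with at least `p` classes. -/
def CMPAtLeast (G : SimpleGraph V) (F : Set V) (p : ℕ) : Prop :=
  ∃ P, IsCMP G F P ∧ ∃ f : Fin p ↪ Set V, ∀ i, f i ∈ P

/-- `F ∈ cmd_p` of the induced subgraph of `G` on the ground set `W`: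
`F` is an inclusion-wise maximal subset of `W` inducing a complete multipartite
graph with at least `p` classes. -/
def Cmd (G : SimpleGraph V) (W : Set V) (p : ℕ) (F : Set V) : Prop :=
  F ⊆ W ∧ CMPAtLeast G F p ∧
    ∀ F', F' ⊆ W → F ⊆ F' → CMPAtLeast G F' p → F' = F

/-- The neighbourhood of `v` in `G` intersects at most one class of `P`. -/
def MeetsAtMostOneClass (G : SimpleGraph V) (P : Set (Set V)) (v : V) : Prop :=
  ∀ C ∈ P, ∀ D ∈ P, (∃ x ∈ C, G.Adj v x) → (∃ y ∈ D, G.Adj v y) → C = D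

/-- The induced subgraph `G[X]`, viewed as a graph on the same vertex set
(only edges with both endpoints in `X` are kept). -/
def inducedOn (G : SimpleGraph V) (X : Set V) : SimpleGraph V where
  Adj a b := G.Adj a b ∧ a ∈ X ∧ b ∈ X
  symm := by constructor; rintro a b ⟨h, ha, hb⟩; exact ⟨h.symm, hb, ha⟩
  loopless := by constructor; rintro a ⟨h, _⟩; exact G.loopless.irrefl a h

/-- The set of edges of `G` with both endpoints in `X`, i.e. the edges of `G[X]`. -/
def edgesWithin (G : SimpleGraph V) (X : Set V) : Set (Sym2 V) :=
  (inducedOn G X).edgeSet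

/-- `(G,k)` is a yes-instance of Prison-Free Edge Deletion. -/
def DeletionYes (G : SimpleGraph V) (k : ℕ) : Prop :=
  ∃ A : Set (Sym2 V), A ⊆ G.edgeSet ∧ A.Finite ∧ A.ncard ≤ k ∧
    PrisonFree (G.deleteEdges A)

/-- `P` is a strict supergraph of a prison in `G`: a 5-vertex set whose induced
subgraph is `K₅` or `K₅` minus one edge (at most one non-adjacent pair). -/
def StrictSupPrison (G : SimpleGraph V) (P : Set V) : Prop :=
  P.ncard = 5 ∧ ∃ u v : V, ∀ x ∈ P, ∀ y ∈ P, x ≠ y → ¬ G.Adj x y →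
    (x = u ∧ y = v) ∨ (x = v ∧ y = u)

/-- `P` is a supergraph of a prison in `G`: a 5-vertex set whose induced subgraph
contains a prison on `P` as a spanning subgraph, i.e. all non-adjacent pairs in `P`
are among two pairs sharing a common vertex. -/
def SupPrison (G : SimpleGraph V) (P : Set V) : Prop :=
  P.ncard = 5 ∧ ∃ w u v : V, ∀ x ∈ P, ∀ y ∈ P, x ≠ y → ¬ G.Adj x y →
    (({x, y} : Set V) = {w, u} ∨ ({x, y} : Set V) = {w, v})

/-- Hypothesis (H1): every edge of `G` that does not have both endpoints in `S`
is contained in a strict supergraph of a prison in `G`. -/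
def H1 (G : SimpleGraph V) (S : Set V) : Prop :=
  ∀ u v : V, G.Adj u v → ¬(u ∈ S ∧ v ∈ S) →
    ∃ P, StrictSupPrison G P ∧ u ∈ P ∧ v ∈ P

/-- Hypothesis (H2): every 5-vertex set inducing a prison in `G` contains at least
two edges with both endpoints in `S`. -/
def H2 (G : SimpleGraph V) (S : Set V) : Prop :=
  ∀ P, InducesPrison G P →
    ∃ e₁ e₂ : Sym2 V, e₁ ≠ e₂ ∧ e₁ ∈ edgesWithin G (P ∩ S) ∧ e₂ ∈ edgesWithin G (P ∩ S)

/-- `B`: the edges of `G−S` lying in no triangle of `G−S`. -/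
def BSet (G : SimpleGraph V) (S : Set V) : Set (Sym2 V) :=
  {e ∈ edgesWithin G Sᶜ | ¬ ∃ w ∈ Sᶜ, ∀ x ∈ e, G.Adj w x}

/-- `B_e` for the edge `e = ab` of `G[S]`: the edges of `B` both of whose endpoints
are adjacent in `G` to both `a` and `b`. -/
def BOf (G : SimpleGraph V) (S : Set V) (a b : V) : Set (Sym2 V) :=
  {f ∈ BSet G S | ∀ x ∈ f, G.Adj x a ∧ G.Adj x b}

/-- `V(B_e)`: the set of endpoints of the edges of `B_e`. -/
def BVerts (G : SimpleGraph V) (S : Set V) (a b : V) : Set V :=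
  {x | ∃ f ∈ BOf G S a b, x ∈ f}

/-- The graph `G ∪ A` obtained by adding the pairs in `A` as edges. -/
def addEdges (G : SimpleGraph V) (A : Set (Sym2 V)) : SimpleGraph V :=
  G ⊔ SimpleGraph.fromEdgeSet A

/-- `A` is a prison-free completion set for `G`: a set of non-edges (unordered
pairs of distinct vertices not adjacent in `G`) whose addition makes `G` prison-free. -/
def CompletionSet (G : SimpleGraph V) (A : Set (Sym2 V)) : Prop :=
  (∀ e ∈ A, ¬ e.IsDiag) ∧ (∀ e ∈ A, e ∉ G.edgeSet) ∧ PrisonFree (addEdges G A)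

/-- `A` is a minimal prison-free completion set for `G`. -/
def MinCompletionSet (G : SimpleGraph V) (A : Set (Sym2 V)) : Prop :=
  CompletionSet G A ∧ ∀ A' ⊂ A, ¬ CompletionSet G A'

/-- `A` is a solution to the instance `(G,k)` of Prison-Free Edge Completion:
a prison-free completion set of size at most `k`. -/
def Solution (G : SimpleGraph V) (k : ℕ) (A : Set (Sym2 V)) : Prop :=
  CompletionSet G A ∧ A.Finite ∧ A.ncard ≤ k

/-- `A` is a minimal solution to `(G,k)`: a solution no proper subset of which is a
prison-free completion set. -/
def MinSolution (G : SimpleGraph V) (k : ℕ) (A : Set (Sym2 V)) : Prop :=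
  Solution G k A ∧ ∀ A' ⊂ A, ¬ CompletionSet G A'

/-- `K` is a set of 4 vertices inducing a complete graph `K₄` in `G`. -/
def IsK4 (G : SimpleGraph V) (K : Set V) : Prop :=
  K.ncard = 4 ∧ ∀ u ∈ K, ∀ v ∈ K, u ≠ v → G.Adj u v

/-- The modulator property of the set `S` (output of the sunflower-based
Lemma): for every prison `P` in `G` and every edge set `A ⊆ E(G)` with `|A| ≤ k`,
if deleting `A` from `G[S]` yields a prison-free graph then `A` contains an edge
of `G[P]`. -/
def GoodModulator (G : SimpleGraph V) (k : ℕ) (S : Set V) : Prop :=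
  ∀ P : Set V, InducesPrison G P →
    ∀ A : Set (Sym2 V), A ⊆ G.edgeSet → A.Finite → A.ncard ≤ k →
      PrisonFree ((inducedOn G S).deleteEdges A) →
      ∃ e ∈ A, e ∈ edgesWithin G P

/-- Hypothesis (H3): for every `F' ∈ cmd₃(G−S)` and every inclusion-wise maximal
set `F ⊇ F'` such that `G[F]` is complete multipartite, some vertex outside `F`
has neighbours in at least two classes of `F`. -/
def H3 (G : SimpleGraph V) (S : Set V) : Prop :=
  ∀ F', Cmd G Sᶜ 3 F' → ∀ F : Set V, F' ⊆ F → CMP G F →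
    (∀ F'', F ⊆ F'' → CMP G F'' → F'' = F) →
    ∃ v ∉ F, ∃ P, IsCMP G F P ∧
      ∃ C ∈ P, ∃ D ∈ P, C ≠ D ∧ (∃ x ∈ C, G.Adj v x) ∧ ∃ y ∈ D, G.Adj v y

/-- `F` is an inclusion-wise maximal subset of `W` inducing a complete
multipartite subgraph of `G`. -/
def MaxCMPon (G : SimpleGraph V) (W F : Set V) : Prop :=
  F ⊆ W ∧ CMP G F ∧ ∀ F'', F'' ⊆ W → F ⊆ F'' → CMP G F'' → F'' = F


/-!
Take `u ∈ C₁` and `v ∈ C₂`. By (H1) the edge `uv` lies in a 5-set `P₅` missing at most one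
edge, so `P₅` contains `z, z'` such that `u v z z'` is a `K₄`. By (H2) no prison has at most two
vertices in `S`, and all vertices of `F` lie outside `S`. This forces some `s ∈ {z, z'}` outside
`F` to see a vertex of `C₃` (at most one of `z, z'` lies in `F`, and then in `C₃`). Now `s` sees a
vertex in each of the three classes, and then all of `F`: a vertex `y` of a class `C` not seen by
`s` would span a prison with `s` and its neighbours in the three classes, `y` seeing exactly the
two outside `C`. Maximality of `F` in `G − S` finally puts `s` in `S`.
-/

section Prisons

variable {G : SimpleGraph V}

theorem inducesPrison_of_adj {a b c d e : V}
    (hab : G.Adj a b) (hac : G.Adj a c) (had : G.Adj a d)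
    (hbc : G.Adj b c) (hbd : G.Adj b d) (hcd : G.Adj c d)
    (hea : G.Adj e a) (heb : G.Adj e b) (hec : ¬ G.Adj e c) (hed : ¬ G.Adj e d)
    (hec' : e ≠ c) (hed' : e ≠ d) :
    InducesPrison G {a, b, c, d, e} := by
  have inj : Function.Injective ![a, b, c, d, e] := by
    have := hab.ne; have := hac.ne; have := had.ne; have := hbc.ne; have := hbd.ne
    have := hcd.ne; have := hea.ne; have := heb.ne
    intro i j hij
    fin_cases i <;> fin_cases j <;> simp_all
  refine ⟨⟨![a, b, c, d, e], inj⟩, ?_, fun i j => ?_⟩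
  · ext x
    simp [eq_comm, or_comm, or_left_comm]
  · have hce : ¬ G.Adj c e := fun h => hec h.symm
    have hde : ¬ G.Adj d e := fun h => hed h.symm
    fin_cases i <;> fin_cases j <;>
      simp [prison, hab, hac, had, hbc, hbd, hcd, hea, heb, hec, hed, hce, hde, hab.symm,
        hac.symm, had.symm, hbc.symm, hbd.symm, hcd.symm, hea.symm, heb.symm]

theorem edge_eq_of_subset_pair {T : Set V} {p q : V} {e : Sym2 V}
    (he : e ∈ edgesWithin G T) (hT : T ⊆ {p, q}) : e = s(p, q) := by
  induction e using Sym2.ind with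
  | _ x y =>
    obtain ⟨hxy, hx, hy⟩ : G.Adj x y ∧ x ∈ T ∧ y ∈ T := he
    rcases hT hx with rfl | rfl <;> rcases hT hy with rfl | rfl <;>
      first | exact absurd hxy (G.loopless.irrefl _) | rfl | exact Sym2.eq_swap

theorem H2.not_inter_subset_pair {S Q : Set V} (h2 : H2 G S) (hQ : InducesPrison G Q)
    (p q : V) : ¬ Q ∩ S ⊆ {p, q} := fun hsub => by
  obtain ⟨e₁, e₂, hne, he₁, he₂⟩ := h2 Q hQ
  exact hne ((edge_eq_of_subset_pair he₁ hsub).trans (edge_eq_of_subset_pair he₂ hsub).symm)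

theorem H2.adj_or_adj {S : Set V} (h2 : H2 G S) {a b c d e : V}
    (hab : G.Adj a b) (hac : G.Adj a c) (had : G.Adj a d)
    (hbc : G.Adj b c) (hbd : G.Adj b d) (hcd : G.Adj c d)
    (hea : G.Adj e a) (heb : G.Adj e b) (hec : e ≠ c) (hed : e ≠ d)
    (ha : a ∉ S) (hb : b ∉ S) (he : e ∉ S) : G.Adj e c ∨ G.Adj e d := by
  by_contra! h
  refine h2.not_inter_subset_pair
    (inducesPrison_of_adj hab hac had hbc hbd hcd hea heb h.1 h.2 hec hed) c d ?_
  rintro x ⟨hx, hxS⟩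
  rcases hx with rfl | rfl | rfl | rfl | rfl <;> simp_all

theorem StrictSupPrison.exists_vertex_cover {P D : Set V} (hP : StrictSupPrison G P)
    (hDP : D ⊆ P) (hD : D.Nonempty) :
    ∃ t ∈ D, ∀ x ∈ D, ∀ y ∈ P, x ≠ y → ¬ G.Adj x y → x = t ∨ y = t := by
  obtain ⟨-, u₀, v₀, hnon⟩ := hP
  by_cases hu₀ : u₀ ∈ D
  · refine ⟨u₀, hu₀, fun x hx y hy hxy hn => ?_⟩
    rcases hnon x (hDP hx) y hy hxy hn with ⟨rfl, -⟩ | ⟨-, rfl⟩ <;> simp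
  by_cases hv₀ : v₀ ∈ D
  · refine ⟨v₀, hv₀, fun x hx y hy hxy hn => ?_⟩
    rcases hnon x (hDP hx) y hy hxy hn with ⟨-, rfl⟩ | ⟨rfl, -⟩ <;> simp
  obtain ⟨t, ht⟩ := hD
  refine ⟨t, ht, fun x hx y hy hxy hn => ?_⟩
  rcases hnon x (hDP hx) y hy hxy hn with ⟨rfl, -⟩ | ⟨rfl, -⟩ <;> contradiction

theorem StrictSupPrison.exists_common_adj_edge {P : Set V} {u v : V} (hP : StrictSupPrison G P)
    (hu : u ∈ P) (hv : v ∈ P) (huv : u ≠ v) :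
    ∃ z ∈ P, ∃ z' ∈ P, G.Adj z u ∧ G.Adj z v ∧ G.Adj z' u ∧ G.Adj z' v ∧ G.Adj z z' := by
  have huvP : {u, v} ⊆ P := Set.insert_subset hu (Set.singleton_subset_iff.mpr hv)
  obtain ⟨t, ⟨htP, htuv⟩, ht⟩ := hP.exists_vertex_cover Set.sdiff_subset
    (Set.nonempty_of_ncard_ne_zero
      (by rw [Set.ncard_sdiff huvP, hP.1, Set.ncard_pair huv]; norm_num))
  have htu : u ≠ t := fun h => htuv (by simp [h])
  have htv : v ≠ t := fun h => htuv (by simp [h])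
  have hcard : (P \ {u, v, t}).ncard = 2 := by
    rw [Set.ncard_sdiff (by simp [Set.insert_subset_iff, hu, hv, htP]), hP.1,
      Set.ncard_eq_three.mpr ⟨u, v, t, huv, htu, htv, rfl⟩]
  obtain ⟨z, z', hzz', hPzz'⟩ := Set.ncard_eq_two.mp hcard
  have hadj : ∀ x ∈ P \ {u, v, t}, ∀ y ∈ P, x ≠ y → y ≠ t → G.Adj x y := by
    rintro x ⟨hxP, hx⟩ y hy hxy hyt
    by_contra hn
    rcases ht x ⟨hxP, fun h => hx (by simp_all)⟩ y hy hxy hn with rfl | rfl <;> simp_all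
  have hz : z ∈ P \ {u, v, t} := by simp [hPzz']
  have hz' : z' ∈ P \ {u, v, t} := by simp [hPzz']
  obtain ⟨hzu, hzv, -⟩ : z ≠ u ∧ z ≠ v ∧ z ≠ t := by simpa [not_or] using hz.2
  obtain ⟨hz'u, hz'v, hz't⟩ : z' ≠ u ∧ z' ≠ v ∧ z' ≠ t := by simpa [not_or] using hz'.2
  exact ⟨z, hz.1, z', hz'.1, hadj z hz u hu hzu htu, hadj z hz v hv hzv htv,
    hadj z' hz' u hu hz'u htu, hadj z' hz' v hv hz'v htv, hadj z hz z' hz'.1 hzz' hz't⟩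

end Prisons

namespace IsCMP

variable {G : SimpleGraph V} {F : Set V} {P : Set (Set V)} {C D : Set V} {x y : V}

theorem eq_of_mem_of_mem (hP : IsCMP G F P) (hC : C ∈ P) (hD : D ∈ P) (hxC : x ∈ C)
    (hxD : x ∈ D) : C = D := by
  by_contra hCD
  exact Set.disjoint_left.mp (hP.2.2.1 C hC D hD hCD) hxC hxD

theorem exists_mem (hP : IsCMP G F P) (hx : x ∈ F) : ∃ C ∈ P, x ∈ C := by
  rwa [← hP.2.1, Set.mem_sUnion] at hx

theorem not_adj (hP : IsCMP G F P) (hC : C ∈ P) (hx : x ∈ C) (hy : y ∈ C) : ¬ G.Adj x y :=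
  fun h => (hP.2.2.2 x ((hP.1 C hC).2 hx) y ((hP.1 C hC).2 hy)).1 h ⟨C, hC, hx, hy⟩

theorem adj (hP : IsCMP G F P) (hC : C ∈ P) (hD : D ∈ P) (hCD : C ≠ D) (hx : x ∈ C)
    (hy : y ∈ D) : G.Adj x y := by
  rw [hP.2.2.2 x ((hP.1 C hC).2 hx) y ((hP.1 D hD).2 hy)]
  rintro ⟨E, hE, hxE, hyE⟩
  exact hCD ((hP.eq_of_mem_of_mem hC hE hx hxE).trans (hP.eq_of_mem_of_mem hE hD hyE hy))

theorem mem_of_adj_of_adj {C₁ C₂ C₃ : Set V} {u v : V} (hP : IsCMP G F {C₁, C₂, C₃})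
    (hu : u ∈ C₁) (hv : v ∈ C₂) (hx : x ∈ F) (hxu : G.Adj x u) (hxv : G.Adj x v) : x ∈ C₃ := by
  obtain ⟨C, hC, hxC⟩ := hP.exists_mem hx
  rcases hC with rfl | rfl | rfl
  · exact absurd hxu (hP.not_adj (by simp) hxC hu)
  · exact absurd hxv (hP.not_adj (by simp) hxC hv)
  · exact hxC

theorem insert_of_forall_adj (hP : IsCMP G F P) {s : V} (hs : s ∉ F)
    (hsF : ∀ x ∈ F, G.Adj s x) : IsCMP G (insert s F) (insert {s} P) := by
  have hsP : ∀ C ∈ P, s ∉ C := fun C hC hsC => hs ((hP.1 C hC).2 hsC)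
  refine ⟨?_, by rw [Set.sUnion_insert, hP.2.1, Set.singleton_union], ?_, ?_⟩
  · rintro C (rfl | hC)
    · exact ⟨Set.singleton_nonempty s, by simp⟩
    · exact ⟨(hP.1 C hC).1, (hP.1 C hC).2.trans (Set.subset_insert s F)⟩
  · rintro C (rfl | hC) D (rfl | hD) hCD
    · exact absurd rfl hCD
    · exact Set.disjoint_singleton_left.mpr (hsP D hD)
    · exact Set.disjoint_singleton_right.mpr (hsP C hC)
    · exact hP.2.2.1 C hC D hD hCD
  · have hsC : ∀ y, ∀ C ∈ P, s ∈ C → y ∈ C → False := fun y C hC h _ => hsP C hC h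
    rintro x (rfl | hx) y (rfl | hy)
    · simp
    · simpa [hsF y hy, ne_of_mem_of_not_mem hy hs] using hsC y
    · simpa [(hsF x hx).symm, ne_of_mem_of_not_mem hx hs] using
        fun C hC hxC hsC' => hsC x C hC hsC' hxC
    · simpa [ne_of_mem_of_not_mem hx hs] using hP.2.2.2 x hx y hy

end IsCMP

theorem CMPAtLeast.insert_of_forall_adj {G : SimpleGraph V} {F : Set V} {p : ℕ} {s : V}
    (hF : CMPAtLeast G F p) (hs : s ∉ F) (hsF : ∀ x ∈ F, G.Adj s x) : CMPAtLeast G (insert s F) p :=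
  let ⟨P, hP, f, hf⟩ := hF
  ⟨insert {s} P, hP.insert_of_forall_adj hs hsF, f, fun i => Set.mem_insert_of_mem _ (hf i)⟩

theorem Cmd.notMem_of_forall_adj {G : SimpleGraph V} {W F : Set V} {p : ℕ} {s : V}
    (hF : Cmd G W p F) (hs : s ∉ F) (hsF : ∀ x ∈ F, G.Adj s x) : s ∉ W := fun hsW =>
  hs (hF.2.2 (insert s F) (Set.insert_subset hsW hF.1) (Set.subset_insert s F)
    (hF.2.1.insert_of_forall_adj hs hsF) ▸ Set.mem_insert s F)

section ThreeClasses

variable {G : SimpleGraph V} {S F : Set V} {C₁ C₂ C₃ : Set V}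

theorem H2.forall_adj_of_mem_class (h2 : H2 G S) (hFS : F ⊆ Sᶜ) {P : Set (Set V)}
    (hP : IsCMP G F P) {C D E : Set V} (hC : C ∈ P) (hD : D ∈ P) (hE : E ∈ P)
    (hCD : C ≠ D) (hCE : C ≠ E) (hDE : D ≠ E) {s x u v : V} (hs : s ∉ F)
    (hx : x ∈ C) (hu : u ∈ D) (hv : v ∈ E) (hsx : G.Adj s x) (hsu : G.Adj s u)
    (hsv : G.Adj s v) : ∀ y ∈ C, G.Adj s y := by
  intro y hy
  by_cases hyx : y = x
  · exact hyx ▸ hsx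
  have hyF : y ∈ F := (hP.1 C hC).2 hy
  have := h2.adj_or_adj (hP.adj hD hE hDE hu hv) (hP.adj hD hC hCD.symm hu hx) hsu.symm
    (hP.adj hE hC hCE.symm hv hx) hsv.symm hsx.symm (hP.adj hC hD hCD hy hu)
    (hP.adj hC hE hCE hy hv) hyx (ne_of_mem_of_not_mem hyF hs)
    (hFS ((hP.1 D hD).2 hu)) (hFS ((hP.1 E hE).2 hv)) (hFS hyF)
  exact (this.resolve_left (hP.not_adj hC hy hx)).symm

theorem H2.forall_adj_of_adj_three_classes (h2 : H2 G S) (hFS : F ⊆ Sᶜ)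
    (hP : IsCMP G F {C₁, C₂, C₃}) (h12 : C₁ ≠ C₂) (h13 : C₁ ≠ C₃) (h23 : C₂ ≠ C₃)
    {s x₁ x₂ x₃ : V} (hs : s ∉ F) (hx₁ : x₁ ∈ C₁) (hx₂ : x₂ ∈ C₂) (hx₃ : x₃ ∈ C₃)
    (hsx₁ : G.Adj s x₁) (hsx₂ : G.Adj s x₂) (hsx₃ : G.Adj s x₃) : ∀ y ∈ F, G.Adj s y := by
  intro y hy
  obtain ⟨C, hC, hyC⟩ := hP.exists_mem hy
  rcases hC with rfl | rfl | rfl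
  · exact h2.forall_adj_of_mem_class hFS hP (by simp) (by simp) (by simp) h12 h13 h23 hs
      hx₁ hx₂ hx₃ hsx₁ hsx₂ hsx₃ y hyC
  · exact h2.forall_adj_of_mem_class hFS hP (by simp) (by simp) (by simp) h12.symm h23 h13 hs
      hx₂ hx₁ hx₃ hsx₂ hsx₁ hsx₃ y hyC
  · exact h2.forall_adj_of_mem_class hFS hP (by simp) (by simp) (by simp) h13.symm h23.symm h12
      hs hx₃ hx₁ hx₂ hsx₃ hsx₁ hsx₂ y hyC

theorem H2.exists_notMem_adj_third_class (h2 : H2 G S) (hFS : F ⊆ Sᶜ)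
    (hP : IsCMP G F {C₁, C₂, C₃}) (h13 : C₁ ≠ C₃) (h23 : C₂ ≠ C₃) {u v z z' : V}
    (hu : u ∈ C₁) (hv : v ∈ C₂) (huv : G.Adj u v) (hzu : G.Adj z u) (hzv : G.Adj z v)
    (hz'u : G.Adj z' u) (hz'v : G.Adj z' v) (hzz' : G.Adj z z') :
    ∃ s, (s = z ∨ s = z') ∧ s ∉ F ∧ ∃ x ∈ C₃, G.Adj s x := by
  by_cases hz : z ∈ F
  · have hz₃ := hP.mem_of_adj_of_adj hu hv hz hzu hzv
    exact ⟨z', Or.inr rfl, fun hz' =>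
      hP.not_adj (by simp) hz₃ (hP.mem_of_adj_of_adj hu hv hz' hz'u hz'v) hzz', z, hz₃, hzz'.symm⟩
  by_cases hz' : z' ∈ F
  · exact ⟨z, Or.inl rfl, hz, z', hP.mem_of_adj_of_adj hu hv hz' hz'u hz'v, hzz'⟩
  obtain ⟨x, hx⟩ := (hP.1 C₃ (by simp)).1
  have hxF : x ∈ F := (hP.1 C₃ (by simp)).2 hx
  rcases h2.adj_or_adj huv hzu.symm hz'u.symm hzv.symm hz'v.symm hzz'
      (hP.adj (by simp) (by simp) h13.symm hx hu) (hP.adj (by simp) (by simp) h23.symm hx hv)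
      (ne_of_mem_of_not_mem hxF hz) (ne_of_mem_of_not_mem hxF hz')
      (hFS ((hP.1 C₁ (by simp)).2 hu)) (hFS ((hP.1 C₂ (by simp)).2 hv)) (hFS hxF) with h | h
  · exact ⟨z, Or.inl rfl, hz, x, hx, h.symm⟩
  · exact ⟨z', Or.inr rfl, hz', x, hx, h.symm⟩

end ThreeClasses

theorem tripartite_neighbour_general {V : Type*} (G : SimpleGraph V)
    (S : Set V) (h1 : H1 G S) (h2 : H2 G S)
    (F : Set V) (hF : Cmd G Sᶜ 3 F)
    (hthree : ∃ (P : Set (Set V)) (C₁ C₂ C₃ : Set V), IsCMP G F P ∧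
      C₁ ≠ C₂ ∧ C₁ ≠ C₃ ∧ C₂ ≠ C₃ ∧ P = {C₁, C₂, C₃}) :
    ∃ s ∈ S, (∀ x ∈ F, G.Adj s x) ∧
      ∃ P₅ : Set V, StrictSupPrison G P₅ ∧ s ∈ P₅ ∧
        ∃ x y : V, x ∈ F ∧ y ∈ F ∧ G.Adj x y ∧ x ∈ P₅ ∧ y ∈ P₅ := by
  obtain ⟨_, C₁, C₂, C₃, hP, h12, h13, h23, rfl⟩ := hthree
  obtain ⟨⟨u, hu⟩, huF⟩ := hP.1 C₁ (by simp)
  obtain ⟨⟨v, hv⟩, hvF⟩ := hP.1 C₂ (by simp)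
  have huv : G.Adj u v := hP.adj (by simp) (by simp) h12 hu hv
  obtain ⟨P₅, hP₅, huP, hvP⟩ := h1 u v huv fun h => hF.1 (huF hu) h.1
  obtain ⟨z, hzP, z', hz'P, hzu, hzv, hz'u, hz'v, hzz'⟩ :=
    hP₅.exists_common_adj_edge huP hvP huv.ne
  obtain ⟨s, hsz, hsF, x, hx, hsx⟩ :=
    h2.exists_notMem_adj_third_class hF.1 hP h13 h23 hu hv huv hzu hzv hz'u hz'v hzz'
  obtain ⟨hsP, hsu, hsv⟩ : s ∈ P₅ ∧ G.Adj s u ∧ G.Adj s v := by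
    rcases hsz with rfl | rfl
    exacts [⟨hzP, hzu, hzv⟩, ⟨hz'P, hz'u, hz'v⟩]
  have hsN : ∀ y ∈ F, G.Adj s y :=
    h2.forall_adj_of_adj_three_classes hF.1 hP h12 h13 h23 hsF hu hv hx hsu hsv hsx
  exact ⟨s, not_not.mp (hF.notMem_of_forall_adj hsF hsN), hsN, P₅, hP₅, hsP,
    u, v, huF hu, hvF hv, huv, huP, hvP⟩

/-- Under (H1) and (H2), if `F ∈ cmd₃(G−S)` has exactly three
classes, then some `s ∈ S` satisfies `F ⊆ N(s)`; moreover there is a strict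
supergraph of a prison in `G` containing `s` and both endpoints of an edge of `G[F]`. -/
theorem tripartite_neighbour {V : Type*} [Fintype V] (G : SimpleGraph V)
    (S : Set V) (h1 : H1 G S) (h2 : H2 G S)
    (F : Set V) (hF : Cmd G Sᶜ 3 F)
    (hthree : ∃ (P : Set (Set V)) (C₁ C₂ C₃ : Set V), IsCMP G F P ∧
      C₁ ≠ C₂ ∧ C₁ ≠ C₃ ∧ C₂ ≠ C₃ ∧ P = {C₁, C₂, C₃}) :
    ∃ s ∈ S, (∀ x ∈ F, G.Adj s x) ∧
      ∃ P₅ : Set V, StrictSupPrison G P₅ ∧ s ∈ P₅ ∧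
        ∃ x y : V, x ∈ F ∧ y ∈ F ∧ G.Adj x y ∧ x ∈ P₅ ∧ y ∈ P₅ :=
  tripartite_neighbour_general G S h1 h2 F hF hthree

end PrisonFreePaper
end

section
/- Let G be a graph and S⊆V(G) a set satisfying (H1) and (H2). Then the nonempty sets among {B_e : e∈E(G[S])} form a partition of B; that is, every edge of B lies in B_e for some edge e of G[S], and for any two edges e1,e2 of G[S], the sets B_{e1} and B_{e2} are either equal or disjoint. -/
/-!
Covering: by (H1) an edge `uv ∈ B` lies in a `K₅` or `K₅ - e` on five vertices. Since `uv` is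
an edge, the missing edge (if any) has an endpoint outside `{u, v}`; dropping it leaves a `K₄`
through `uv`, whose two other vertices are common neighbours of `u` and `v`, hence lie in `S`
because `uv` is in no triangle of `G - S`.

Equal or disjoint: if `uv ∈ B_{ab} ∩ B_{a'b'}` and `w ∉ S` sees `a` and `b`, then `w` sees
`a'`, for otherwise one of the prisons on `{a, b, u, v, w}`, `{u, v, a, b, a'}` or
`{u, c, v, a', w}` (with `c ∈ {a, b}`) has at most one edge inside `S`, against (H2).
Thus `B_{ab} ⊆ B_{a'b'}`.
-/

namespace PrisonFreePaper

variable {V : Type*}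

section Partition

variable {G : SimpleGraph V} {S X P : Set V} {a b a' b' c d e u v w : V}

@[simp]
lemma mem_edgesWithin : s(u, v) ∈ edgesWithin G X ↔ G.Adj u v ∧ u ∈ X ∧ v ∈ X := Iff.rfl

lemma edgesWithin_mono (h : X ⊆ P) : edgesWithin G X ⊆ edgesWithin G P :=
  SimpleGraph.edgeSet_mono fun _ _ ⟨hxy, hx, hy⟩ => ⟨hxy, h hx, h hy⟩

lemma edgesWithin_pair_subset : edgesWithin G {c, d} ⊆ {s(c, d)} := by
  intro f hf
  induction f using Sym2.ind with | _ x y => ?_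
  obtain ⟨hxy, hx, hy⟩ := mem_edgesWithin.1 hf
  rcases hx with rfl | rfl <;> rcases hy with rfl | rfl
  all_goals first | exact absurd hxy (G.loopless.irrefl _) | simp [Sym2.eq_swap]

lemma edgesWithin_triple_subset (hce : ¬G.Adj c e) (hde : ¬G.Adj d e) :
    edgesWithin G {c, d, e} ⊆ {s(c, d)} := by
  intro f hf
  induction f using Sym2.ind with | _ x y => ?_
  obtain ⟨hxy, hx, hy⟩ := mem_edgesWithin.1 hf
  rcases hx with rfl | rfl | rfl <;> rcases hy with rfl | rfl | rfl
  all_goals first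
    | exact absurd hxy (G.loopless.irrefl _) | exact absurd hxy ‹_›
    | exact absurd hxy.symm ‹_› | simp [Sym2.eq_swap]

lemma inducesPrison_of_adj_s13 {v₀ v₁ v₂ v₃ v₄ : V}
    (h01 : G.Adj v₀ v₁) (h02 : G.Adj v₀ v₂) (h03 : G.Adj v₀ v₃) (h04 : G.Adj v₀ v₄)
    (h12 : G.Adj v₁ v₂) (h13 : G.Adj v₁ v₃) (h14 : G.Adj v₁ v₄)
    (h23 : G.Adj v₂ v₃) (n24 : ¬G.Adj v₂ v₄) (n34 : ¬G.Adj v₃ v₄)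
    (ne24 : v₂ ≠ v₄) (ne34 : v₃ ≠ v₄) :
    InducesPrison G {v₀, v₁, v₂, v₃, v₄} := by
  have hinj : Function.Injective ![v₀, v₁, v₂, v₃, v₄] := by
    intro i j h
    fin_cases i <;> fin_cases j <;>
      simp_all [h01.ne, h02.ne, h03.ne, h04.ne, h12.ne, h13.ne, h14.ne, h23.ne]
  refine ⟨⟨_, hinj⟩, ?_, fun i j => ?_⟩
  · simp [Set.range, Fin.exists_fin_succ, Set.ext_iff, eq_comm]
  · fin_cases i <;> fin_cases j <;>
      simp [prison, h01, h02, h03, h04, h12, h13, h14, h23, h01.symm, h02.symm, h03.symm,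
        h04.symm, h12.symm, h13.symm, h14.symm, h23.symm, n24, n34, mt G.adj_symm n24,
        mt G.adj_symm n34]

lemma H2.not_inducesPrison_of_edgesWithin_subset (h2 : H2 G S)
    (hPS : edgesWithin G (P ∩ S) ⊆ {s(c, d)}) : ¬InducesPrison G P := fun hP => by
  obtain ⟨e₁, e₂, hne, he₁, he₂⟩ := h2 P hP
  exact hne ((hPS he₁).trans (hPS he₂).symm)

lemma H2.not_inducesPrison_of_inter_subset_pair (h2 : H2 G S) (hPS : P ∩ S ⊆ {c, d}) :
    ¬InducesPrison G P :=
  h2.not_inducesPrison_of_edgesWithin_subset ((edgesWithin_mono hPS).trans edgesWithin_pair_subset)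

lemma mem_BSet : s(u, v) ∈ BSet G S ↔
    G.Adj u v ∧ u ∉ S ∧ v ∉ S ∧ ∀ w ∉ S, G.Adj w u → ¬G.Adj w v := by
  simp only [BSet, Set.mem_ofPred_eq, mem_edgesWithin, Sym2.forall_mem_pair, Set.mem_compl_iff]
  grind

lemma mem_BOf : s(u, v) ∈ BOf G S a b ↔
    s(u, v) ∈ BSet G S ∧ (G.Adj u a ∧ G.Adj u b) ∧ (G.Adj v a ∧ G.Adj v b) := by
  simp [BOf]

lemma notMem_of_mem_BSet {f : Sym2 V} (hf : f ∈ BSet G S) (hu : u ∈ f) : u ∉ S := by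
  induction f using Sym2.ind with | _ x y => ?_
  obtain ⟨-, hx, hy, -⟩ := mem_BSet.1 hf
  rcases Sym2.mem_iff.1 hu with rfl | rfl
  exacts [hx, hy]

lemma H2.adj_or_adj_of_inter_subset_pair (h2 : H2 G S) {p q r t x : V}
    (hpq : G.Adj p q) (hpr : G.Adj p r) (hpt : G.Adj p t) (hqr : G.Adj q r) (hqt : G.Adj q t)
    (hrt : G.Adj r t) (hxp : G.Adj x p) (hxq : G.Adj x q) (hrx : r ≠ x) (htx : t ≠ x)
    (hx : x ∉ S) (hS : ({p, q, r, t} : Set V) ∩ S ⊆ {c, d}) : G.Adj x r ∨ G.Adj x t := by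
  by_contra! h
  exact h2.not_inducesPrison_of_inter_subset_pair (c := c) (d := d) (by grind)
    (inducesPrison_of_adj_s13 hpq hpr hpt hxp.symm hqr hqt hxq.symm hrt (mt G.adj_symm h.1)
      (mt G.adj_symm h.2) hrx htx)

lemma H2.adj_or_adj_of_notMem (h2 : H2 G S) {p q r t x : V}
    (hpq : G.Adj p q) (hpr : G.Adj p r) (hpt : G.Adj p t) (hqr : G.Adj q r) (hqt : G.Adj q t)
    (hrt : G.Adj r t) (hxp : G.Adj x p) (hxq : G.Adj x q) (hrx : r ≠ x) (htx : t ≠ x)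
    (hp : p ∉ S) (hq : q ∉ S) : G.Adj x r ∨ G.Adj x t := by
  by_contra! h
  have hrx' : ¬G.Adj r x := mt G.adj_symm h.1
  have htx' : ¬G.Adj t x := mt G.adj_symm h.2
  exact h2.not_inducesPrison_of_edgesWithin_subset
    ((edgesWithin_mono (by grind)).trans (edgesWithin_triple_subset hrx' htx'))
    (inducesPrison_of_adj_s13 hpq hpr hpt hxp.symm hqr hqt hxq.symm hrt hrx' htx' hrx htx)

lemma adj_of_mem_BOf (h2 : H2 G S) (huv : s(u, v) ∈ BOf G S a b) (hab : G.Adj a b)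
    (ha' : a' ∈ S) (hua' : G.Adj u a') (hva' : G.Adj v a')
    (hw : w ∉ S) (hwa : G.Adj w a) (hwb : G.Adj w b) : G.Adj w a' := by
  obtain ⟨huvB, ⟨hua, hub⟩, hva, hvb⟩ := mem_BOf.1 huv
  obtain ⟨huv, hu, hv, hB⟩ := mem_BSet.1 huvB
  by_contra hwa'
  have hwu : u ≠ w := by rintro rfl; exact hwa' hua'
  have hwv : v ≠ w := by rintro rfl; exact hwa' hva'
  have hw_uv : G.Adj w u ∨ G.Adj w v :=
    h2.adj_or_adj_of_inter_subset_pair (c := a) (d := b) hab hua.symm hva.symm hub.symm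
      hvb.symm huv hwa hwb hwu hwv hw (by grind)
  have ha'_ab : G.Adj a' a ∨ G.Adj a' b :=
    h2.adj_or_adj_of_notMem huv hua hub hva hvb hab hua'.symm hva'.symm
      (by rintro rfl; exact hwa' hwa) (by rintro rfl; exact hwa' hwb) hu hv
  -- `w` sees an endpoint `x` of `uv` and some `c ∈ {a, b}` adjacent to `a'`; the prison
  -- test on the `K₄` `{x, c, y, a'}` forces `w` to see the other endpoint `y`, a triangle
  -- in `G - S`
  have hwy : ∀ {x y c : V}, x ∉ S → y ∉ S → G.Adj x y → G.Adj x c → G.Adj y c →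
      G.Adj x a' → G.Adj y a' → G.Adj c a' → G.Adj w x → G.Adj w c → y ≠ w →
      G.Adj w y :=
    fun {_ _ c} hx hy hxy hxc hyc hxa' hya' hca' hwx hwc hyw =>
      (h2.adj_or_adj_of_inter_subset_pair (c := c) (d := a') hxc hxy hxa' hyc.symm hca' hya'
        hwx hwc hyw (by rintro rfl; exact hw ha') hw (by grind)).resolve_right hwa'
  rcases hw_uv with hwx | hwx <;> rcases ha'_ab with hca' | hca'
  · exact hB w hw hwx (hwy hu hv huv hua hva hua' hva' hca'.symm hwx hwa hwv)
  · exact hB w hw hwx (hwy hu hv huv hub hvb hua' hva' hca'.symm hwx hwb hwv)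
  · exact hB w hw (hwy hv hu huv.symm hva hua hva' hua' hca'.symm hwx hwa hwu) hwx
  · exact hB w hw (hwy hv hu huv.symm hvb hub hva' hua' hca'.symm hwx hwb hwu) hwx

lemma BOf_subset_of_mem (h2 : H2 G S) (hab : G.Adj a b) (ha' : a' ∈ S) (hb' : b' ∈ S)
    {f : Sym2 V} (hf : f ∈ BOf G S a b) (hf' : f ∈ BOf G S a' b') :
    BOf G S a b ⊆ BOf G S a' b' := by
  induction f using Sym2.ind with | _ u v => ?_
  obtain ⟨-, ⟨hua', hub'⟩, hva', hvb'⟩ := mem_BOf.1 hf'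
  rintro g ⟨hg, hgab⟩
  refine ⟨hg, fun x hx => ?_⟩
  have hxS := notMem_of_mem_BSet hg hx
  obtain ⟨hxa, hxb⟩ := hgab x hx
  exact ⟨adj_of_mem_BOf h2 hf hab ha' hua' hva' hxS hxa hxb,
    adj_of_mem_BOf h2 hf hab hb' hub' hvb' hxS hxa hxb⟩

lemma BOf_eq_or_disjoint (h2 : H2 G S) (ha : a ∈ S) (hb : b ∈ S) (hab : G.Adj a b)
    (ha' : a' ∈ S) (hb' : b' ∈ S) (ha'b' : G.Adj a' b') :
    BOf G S a b = BOf G S a' b' ∨ Disjoint (BOf G S a b) (BOf G S a' b') := by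
  refine or_iff_not_imp_right.2 fun h => ?_
  obtain ⟨f, hf, hf'⟩ := Set.not_disjoint_iff.1 h
  exact (BOf_subset_of_mem h2 hab ha' hb' hf hf').antisymm
    (BOf_subset_of_mem h2 ha'b' ha hb hf' hf)

lemma StrictSupPrison.exists_isClique_diff (hP : StrictSupPrison G P) (huv : G.Adj u v) :
    ∃ e ∈ P \ {u, v}, G.IsClique (P \ {e}) := by
  obtain ⟨hcard, p, q, hpq⟩ := hP
  by_cases hcl : G.IsClique P
  · have hne : (P \ {u, v}).Nonempty := by
      apply Set.nonempty_of_ncard_ne_zero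
      have hdiff := Set.le_ncard_sdiff {u, v} P
      have hpair := Set.ncard_pair huv.ne
      omega
    obtain ⟨e, he⟩ := hne
    exact ⟨e, he, hcl.subset Set.sdiff_subset⟩
  obtain ⟨x, hx, y, hy, hxy, hnxy⟩ : ∃ x ∈ P, ∃ y ∈ P, x ≠ y ∧ ¬G.Adj x y := by
    simpa [SimpleGraph.IsClique, Set.Pairwise] using hcl
  -- all non-adjacent pairs of `P` equal `{x, y}`, so removing `x` or `y` leaves a clique
  have hclique : ∀ e, e = x ∨ e = y → G.IsClique (P \ {e}) := by
    rintro e he x' ⟨hx', hx'e⟩ y' ⟨hy', hy'e⟩ hne'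
    by_contra hn
    have hx'y' := hpq x' hx' y' hy' hne' hn
    have hxy' := hpq x hx y hy hxy hnxy
    simp only [Set.mem_singleton_iff] at hx'e hy'e
    grind
  have hout : x ∉ ({u, v} : Set V) ∨ y ∉ ({u, v} : Set V) := by
    by_contra! h
    simp only [Set.mem_insert_iff, Set.mem_singleton_iff] at h
    grind [G.adj_symm]
  rcases hout with h | h
  exacts [⟨x, ⟨hx, h⟩, hclique x (.inl rfl)⟩, ⟨y, ⟨hy, h⟩, hclique y (.inr rfl)⟩]

lemma StrictSupPrison.exists_adj_of_adj (hP : StrictSupPrison G P) (hu : u ∈ P) (hv : v ∈ P)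
    (huv : G.Adj u v) :
    ∃ c d, G.Adj c d ∧ G.Adj u c ∧ G.Adj u d ∧ G.Adj v c ∧ G.Adj v d := by
  obtain ⟨e, ⟨he, heuv⟩, hcl⟩ := hP.exists_isClique_diff huv
  simp only [Set.mem_insert_iff, Set.mem_singleton_iff, not_or] at heuv
  have hcard : (P \ {u, v, e}).ncard = 2 := by
    have h3 : ({u, v, e} : Set V).ncard = 3 :=
      Set.ncard_eq_three.2 ⟨u, v, e, huv.ne, Ne.symm heuv.1, Ne.symm heuv.2, rfl⟩
    rw [Set.ncard_sdiff (by grind [Set.insert_subset_iff]), hP.1, h3]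
  obtain ⟨c, d, hcd, hCD⟩ := Set.ncard_eq_two.1 hcard
  have hc : c ∈ P \ {u, v, e} := hCD ▸ Set.mem_insert c {d}
  have hd : d ∈ P \ {u, v, e} := hCD ▸ Set.mem_insert_of_mem c rfl
  simp only [Set.mem_sdiff, Set.mem_insert_iff, Set.mem_singleton_iff, not_or] at hc hd
  have hu' : u ∈ P \ {e} := ⟨hu, Ne.symm heuv.1⟩
  have hv' : v ∈ P \ {e} := ⟨hv, Ne.symm heuv.2⟩
  have hc' : c ∈ P \ {e} := ⟨hc.1, hc.2.2.2⟩
  have hd' : d ∈ P \ {e} := ⟨hd.1, hd.2.2.2⟩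
  exact ⟨c, d, hcl hc' hd' hcd, hcl hu' hc' (Ne.symm hc.2.1), hcl hu' hd' (Ne.symm hd.2.1),
    hcl hv' hc' (Ne.symm hc.2.2.1), hcl hv' hd' (Ne.symm hd.2.2.1)⟩

lemma exists_BOf_of_mem_BSet (h1 : H1 G S) {f : Sym2 V} (hf : f ∈ BSet G S) :
    ∃ a b, a ∈ S ∧ b ∈ S ∧ G.Adj a b ∧ f ∈ BOf G S a b := by
  induction f using Sym2.ind with | _ u v => ?_
  obtain ⟨huv, hu, hv, hB⟩ := mem_BSet.1 hf
  obtain ⟨P, hP, huP, hvP⟩ := h1 u v huv (fun h => hu h.1)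
  obtain ⟨c, d, hcd, huc, hud, hvc, hvd⟩ := hP.exists_adj_of_adj huP hvP huv
  have hS : ∀ x, G.Adj u x → G.Adj v x → x ∈ S := fun x hux hvx =>
    not_not.1 fun hx => hB x hx hux.symm hvx.symm
  exact ⟨c, d, hS c huc hvc, hS d hud hvd, hcd, mem_BOf.2 ⟨hf, ⟨huc, hud⟩, hvc, hvd⟩⟩

end Partition

theorem B_partition_general {V : Type*} (G : SimpleGraph V)
    (S : Set V) (h1 : H1 G S) (h2 : H2 G S) :
    (∀ f ∈ BSet G S, ∃ a b : V, a ∈ S ∧ b ∈ S ∧ G.Adj a b ∧ f ∈ BOf G S a b) ∧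
    (∀ a b a' b' : V, a ∈ S → b ∈ S → G.Adj a b → a' ∈ S → b' ∈ S → G.Adj a' b' →
      BOf G S a b = BOf G S a' b' ∨ Disjoint (BOf G S a b) (BOf G S a' b')) :=
  ⟨fun _ hf => exists_BOf_of_mem_BSet h1 hf,
    fun _ _ _ _ ha hb hab ha' hb' ha'b' => BOf_eq_or_disjoint h2 ha hb hab ha' hb' ha'b'⟩

/-- Under (H1) and (H2), the nonempty sets among
`{B_e : e ∈ E(G[S])}` partition `B`: every edge of `B` lies in some `B_e`, and any
two such sets are equal or disjoint. -/
theorem B_partition {V : Type*} [Fintype V] (G : SimpleGraph V)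
    (S : Set V) (h1 : H1 G S) (h2 : H2 G S) :
    (∀ f ∈ BSet G S, ∃ a b : V, a ∈ S ∧ b ∈ S ∧ G.Adj a b ∧ f ∈ BOf G S a b) ∧
    (∀ a b a' b' : V, a ∈ S → b ∈ S → G.Adj a b → a' ∈ S → b' ∈ S → G.Adj a' b' →
      BOf G S a b = BOf G S a' b' ∨ Disjoint (BOf G S a b) (BOf G S a' b')) :=
  B_partition_general G S h1 h2

end PrisonFreePaper
end
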